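/- arXiv:2504.09124 — 4 statements merged into one kernel-verified Lean document; each statement's English description precedes it below -/
import Mathlib

section
/- For two matrices M₁, M₂ in 𝒟 (unitary matrices with nonvanishing last row), p(M₁) = p(M₂) holds if and only if M₂ = M₁ g for some diagonal unitary matrix g ∈ U(1)^n. -/
/-!
Equal ratios in every column say that the columns of `M₂` are nonzero multiples of those of
`M₁`, i.e. `M₂ = M₁ * diagonal g`. Then `diagonal g = star M₁ * M₂` is unitary, which for a
diagonal matrix means `‖g j‖ = 1`.
-/

namespace Matrix

variable {m n : Type*} [Fintype n] [DecidableEq n]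

theorem diagonal_mem_unitaryGroup_iff {𝕜 : Type*} [RCLike 𝕜] {g : n → 𝕜} :
    diagonal g ∈ unitaryGroup n 𝕜 ↔ ∀ j, ‖g j‖ = 1 := by
  rw [mem_unitaryGroup_iff', star_eq_conjTranspose, diagonal_conjTranspose, diagonal_mul_diagonal,
    diagonal_eq_one, funext_iff]
  refine forall_congr' fun j => ?_
  rw [Pi.star_apply, RCLike.star_def, RCLike.conj_mul, Pi.one_apply, ← RCLike.ofReal_pow,
    ← RCLike.ofReal_one, RCLike.ofReal_inj, pow_eq_one_iff_of_nonneg (norm_nonneg _) two_ne_zero]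

theorem norm_eq_one_of_mul_diagonal_mem_unitaryGroup {𝕜 : Type*} [RCLike 𝕜]
    {M : Matrix n n 𝕜} {g : n → 𝕜} (hM : M ∈ unitaryGroup n 𝕜)
    (hMg : M * diagonal g ∈ unitaryGroup n 𝕜) (j : n) : ‖g j‖ = 1 := by
  have hg : diagonal g ∈ unitaryGroup n 𝕜 := by
    simpa only [← mul_assoc, Unitary.star_mul_self_of_mem hM, one_mul] using
      mul_mem (Unitary.star_mem hM) hMg
  exact diagonal_mem_unitaryGroup_iff.mp hg j

theorem div_row_eq_div_row_iff_exists_mul_diagonal {K : Type*} [Field K]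
    {M₁ M₂ : Matrix m n K} {L : m} (h₁ : ∀ j, M₁ L j ≠ 0) :
    (∀ k j, M₁ k j / M₁ L j = M₂ k j / M₂ L j) ↔
      ∃ g : n → K, (∀ j, g j ≠ 0) ∧ M₂ = M₁ * diagonal g := by
  constructor
  · intro h
    have h₂ : ∀ j, M₂ L j ≠ 0 := fun j h0 => by
      simpa [div_self (h₁ j), h0] using h L j
    refine ⟨fun j => M₂ L j / M₁ L j, fun j => div_ne_zero (h₂ j) (h₁ j), ?_⟩
    ext k j
    rw [mul_diagonal, mul_div_left_comm, h k j, mul_div_cancel₀ _ (h₂ j)]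
  · rintro ⟨g, hg, rfl⟩ k j
    rw [mul_diagonal, mul_diagonal, mul_div_mul_right _ _ (hg j)]

end Matrix

open Matrix in
theorem stmt_1_general (n : ℕ)
    (L : Fin n)
    (M₁ M₂ : Matrix (Fin n) (Fin n) ℂ)
    (hM₁ : M₁ ∈ Matrix.unitaryGroup (Fin n) ℂ)
    (hM₂ : M₂ ∈ Matrix.unitaryGroup (Fin n) ℂ)
    (h₁ : ∀ j, M₁ L j ≠ 0) :
    (∀ k j, M₁ k j / M₁ L j = M₂ k j / M₂ L j) ↔
      ∃ g : Fin n → ℂ, (∀ j, ‖g j‖ = 1) ∧ M₂ = M₁ * Matrix.diagonal g := by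
  rw [div_row_eq_div_row_iff_exists_mul_diagonal h₁]
  constructor
  · rintro ⟨g, -, rfl⟩
    exact ⟨g, norm_eq_one_of_mul_diagonal_mem_unitaryGroup hM₁ hM₂, rfl⟩
  · rintro ⟨g, hg, rfl⟩
    exact ⟨g, fun j => norm_ne_zero_iff.mp (by rw [hg j]; exact one_ne_zero), rfl⟩

open Matrix in
/-- For unitary matrices `M₁, M₂` with nonvanishing last row, the affine-coordinate
projections `p(M₁)` and `p(M₂)` agree iff `M₂ = M₁ g` for some diagonal unitary `g`. -/
theorem stmt_1 (n : ℕ) (hn : 2 ≤ n)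
    (L : Fin n) (hL : (L : ℕ) = n - 1)
    (M₁ M₂ : Matrix (Fin n) (Fin n) ℂ)
    (hM₁ : M₁ ∈ Matrix.unitaryGroup (Fin n) ℂ)
    (hM₂ : M₂ ∈ Matrix.unitaryGroup (Fin n) ℂ)
    (h₁ : ∀ j, M₁ L j ≠ 0) (h₂ : ∀ j, M₂ L j ≠ 0) :
    (∀ k j, M₁ k j / M₁ L j = M₂ k j / M₂ L j) ↔
      ∃ g : Fin n → ℂ, (∀ j, ‖g j‖ = 1) ∧ M₂ = M₁ * Matrix.diagonal g :=
  stmt_1_general n L M₁ M₂ hM₁ hM₂ h₁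
end

section
/- The image 𝒪 = p(𝒟) equals the set of tuples w = (w₁,…,w_n) ∈ (ℂ^{n-1})^n such that w_i* w_j = −1 for all 1 ≤ i < j ≤ n. -/
/-!
A matrix whose last row has no zero entry is determined by its last row `c` and its affine
coordinates `w`: its `j`-th column is `c j • (w j, 1)`. Hence the `(i, j)` entry of `Mᴴ * M` is
`conj (c i) * c j * (wᵢ* wⱼ + 1)`, so for `i ≠ j` unitarity forces `wᵢ* wⱼ = -1`. Conversely,
given such `w`, the columns `(w j, 1)` are pairwise orthogonal and become orthonormal after
scaling by `c j = (‖w j‖² + 1)^(-1/2)`.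
-/

open Matrix ComplexConjugate

namespace AffineCoords

variable {m : ℕ} {ι : Type*}

def liftCols (w : ι → Fin m → ℂ) (c : ι → ℂ) : Matrix (Fin (m + 1)) ι ℂ :=
  Matrix.of fun k j => c j * (Fin.snoc (w j) 1 : Fin (m + 1) → ℂ) k

@[simp] lemma liftCols_castSucc (w : ι → Fin m → ℂ) (c : ι → ℂ) (s : Fin m) (j : ι) :
    liftCols w c s.castSucc j = c j * w j s := by
  simp [liftCols]

@[simp] lemma liftCols_last (w : ι → Fin m → ℂ) (c : ι → ℂ) (j : ι) :
    liftCols w c (Fin.last m) j = c j := by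
  simp [liftCols]

lemma conjTranspose_liftCols_mul_self_apply (w : ι → Fin m → ℂ) (c : ι → ℂ) (i j : ι) :
    ((liftCols w c)ᴴ * liftCols w c) i j =
      conj (c i) * c j * (∑ s, conj (w i s) * w j s + 1) := by
  simp only [mul_apply, conjTranspose_apply, Fin.sum_univ_castSucc, liftCols_castSucc,
    liftCols_last, RCLike.star_def, map_mul, mul_add, mul_one, Finset.mul_sum]
  congr 1
  refine Finset.sum_congr rfl fun s _ => by ring

lemma eq_liftCols_of_last_ne_zero (M : Matrix (Fin (m + 1)) ι ℂ)
    (hM : ∀ j, M (Fin.last m) j ≠ 0) :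
    M = liftCols (fun j s => M s.castSucc j / M (Fin.last m) j) (M (Fin.last m)) := by
  ext k j
  induction k using Fin.lastCases with
  | last => simp
  | cast s => simp [mul_div_cancel₀ _ (hM j)]

lemma sum_conj_mul_eq_neg_one_of_conjTranspose_mul_self_eq_one [DecidableEq ι]
    {w : ι → Fin m → ℂ} {c : ι → ℂ} (hM : (liftCols w c)ᴴ * liftCols w c = 1)
    (hc : ∀ j, c j ≠ 0) {i j : ι} (hij : i ≠ j) :
    ∑ s, conj (w i s) * w j s = -1 := by
  have h := congrFun (congrFun hM i) j
  rw [conjTranspose_liftCols_mul_self_apply, one_apply_ne hij] at h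
  have hcc : conj (c i) * c j ≠ 0 := mul_ne_zero (by simpa using hc i) (hc j)
  linear_combination (mul_eq_zero.mp h).resolve_left hcc

noncomputable def normalizingFactor (w : ι → Fin m → ℂ) (j : ι) : ℂ :=
  ((√(∑ s, ‖w j s‖ ^ 2 + 1) : ℝ) : ℂ)⁻¹

lemma normalizingFactor_ne_zero (w : ι → Fin m → ℂ) (j : ι) : normalizingFactor w j ≠ 0 := by
  have : 0 < ∑ s, ‖w j s‖ ^ 2 + 1 := by positivity
  simp [normalizingFactor, Real.sqrt_ne_zero', this]

lemma conj_normalizingFactor_mul_self (w : ι → Fin m → ℂ) (j : ι) :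
    conj (normalizingFactor w j) * normalizingFactor w j *
      (∑ s, conj (w j s) * w j s + 1) = 1 := by
  have hpos : 0 < ∑ s, ‖w j s‖ ^ 2 + 1 := by positivity
  have hsum : ∑ s, conj (w j s) * w j s + 1 = ((∑ s, ‖w j s‖ ^ 2 + 1 : ℝ) : ℂ) := by
    push_cast [Complex.conj_mul']; rfl
  rw [hsum, normalizingFactor, map_inv₀, Complex.conj_ofReal, ← mul_inv, ← Complex.ofReal_mul,
    Real.mul_self_sqrt hpos.le, inv_mul_cancel₀ (by exact_mod_cast hpos.ne')]

lemma conjTranspose_liftCols_normalizingFactor_mul_self [DecidableEq ι] {w : ι → Fin m → ℂ}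
    (hw : Pairwise fun i j => ∑ s, conj (w i s) * w j s = -1) :
    (liftCols w (normalizingFactor w))ᴴ * liftCols w (normalizingFactor w) = 1 := by
  ext i j
  rw [conjTranspose_liftCols_mul_self_apply]
  obtain rfl | hij := eq_or_ne i j
  · rw [one_apply_eq, conj_normalizingFactor_mul_self]
  · rw [one_apply_ne hij, hw hij]; ring

lemma pairwise_sum_conj_mul_of_lt [LinearOrder ι] {w : ι → Fin m → ℂ}
    (hw : ∀ i j, i < j → ∑ s, conj (w i s) * w j s = -1) :
    Pairwise fun i j => ∑ s, conj (w i s) * w j s = -1 := by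
  intro i j hij
  rcases hij.lt_or_gt with h | h
  · exact hw i j h
  · simpa [map_sum, mul_comm] using congrArg conj (hw j i h)

theorem image_unitaryGroup (m : ℕ) :
    {w : Fin (m + 1) → Fin m → ℂ | ∃ M ∈ unitaryGroup (Fin (m + 1)) ℂ,
        (∀ j, M (Fin.last m) j ≠ 0) ∧ ∀ j s, w j s = M s.castSucc j / M (Fin.last m) j} =
      {w | ∀ i j, i < j → ∑ s, conj (w i s) * w j s = -1} := by
  ext w
  constructor
  · rintro ⟨M, hM, hlast, hw⟩ i j hij
    obtain rfl : w = fun j s => M s.castSucc j / M (Fin.last m) j := funext fun j => funext (hw j)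
    rw [mem_unitaryGroup_iff', star_eq_conjTranspose, eq_liftCols_of_last_ne_zero M hlast] at hM
    exact sum_conj_mul_eq_neg_one_of_conjTranspose_mul_self_eq_one hM hlast hij.ne
  · intro hw
    refine ⟨liftCols w (normalizingFactor w), ?_,
      fun j => by simpa using normalizingFactor_ne_zero w j,
      fun j s => by simp [mul_div_cancel_left₀ _ (normalizingFactor_ne_zero w j)]⟩
    rw [mem_unitaryGroup_iff', star_eq_conjTranspose]
    exact conjTranspose_liftCols_normalizingFactor_mul_self (pairwise_sum_conj_mul_of_lt hw)

end AffineCoords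

open Matrix in
theorem stmt_2_general (n : ℕ)
    (L : Fin n) (hL : (L : ℕ) = n - 1)
    (emb : Fin (n - 1) → Fin n) (hemb : ∀ s, (emb s : ℕ) = (s : ℕ)) :
    {w : Fin n → Fin (n - 1) → ℂ |
        ∃ M ∈ Matrix.unitaryGroup (Fin n) ℂ,
          (∀ j, M L j ≠ 0) ∧ ∀ j s, w j s = M (emb s) j / M L j} =
      {w : Fin n → Fin (n - 1) → ℂ |
        ∀ i j : Fin n, i < j → ∑ s, (starRingEnd ℂ) (w i s) * w j s = -1} := by
  obtain ⟨m, rfl⟩ : ∃ m, n = m + 1 := ⟨n - 1, by omega⟩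
  obtain rfl : L = Fin.last m := Fin.ext (by simpa using hL)
  obtain rfl : emb = Fin.castSucc := funext fun s => Fin.ext (by simpa using hemb s)
  exact AffineCoords.image_unitaryGroup m

open Matrix in
/-- The image `𝒪 = p(𝒟)` of the set of unitary matrices with nonvanishing last row under
the affine-coordinate projection `p` equals the set of tuples `w = (w₁, …, wₙ)` of vectors
in `ℂ^{n-1}` such that `wᵢ* wⱼ = −1` for all `i < j`. -/
theorem stmt_2 (n : ℕ) (hn : 2 ≤ n)
    (L : Fin n) (hL : (L : ℕ) = n - 1)
    (emb : Fin (n - 1) → Fin n) (hemb : ∀ s, (emb s : ℕ) = (s : ℕ)) :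
    {w : Fin n → Fin (n - 1) → ℂ |
        ∃ M ∈ Matrix.unitaryGroup (Fin n) ℂ,
          (∀ j, M L j ≠ 0) ∧ ∀ j s, w j s = M (emb s) j / M L j} =
      {w : Fin n → Fin (n - 1) → ℂ |
        ∀ i j : Fin n, i < j → ∑ s, (starRingEnd ℂ) (w i s) * w j s = -1} :=
  stmt_2_general n L hL emb hemb
end

section
/- The function f(λ) = Π_{j=1}^n λ_j^{|u_j|/2} on the interior of the simplex 𝒯_n is an eigenfunction of the operator 𝒢 − (1/4)Σ_{j=1}^n u_j² (1−λ_j)/λ_j with eigenvalue −((n−1)/2) Σ_{j=1}^n |u_j| − (1/4) Σ_{1≤i≠j≤n} |u_i u_j|, where 𝒢 = Σ_j λ_j(1−λ_j)∂²_{λ_j} + Σ_j (1 − nλ_j)∂_{λ_j} − Σ_{j≠ℓ} λ_j λ_ℓ ∂²_{λ_j λ_ℓ}. -/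
/-!
Write `f = ∏ⱼ λⱼ ^ aⱼ` with `aⱼ = |uⱼ|/2`. Each coordinate derivative acts on `f` as
multiplication by `aⱼ / λⱼ`, so `∂ⱼ∂ⱼ f = aⱼ(aⱼ - 1)/λⱼ² f` and `∂ⱼ∂ₘ f = aⱼaₘ/(λⱼλₘ) f`
for `j ≠ m`. Every term of the operator is then a multiple of `f`: the off-diagonal part gives
`Σ_{j≠m} aⱼaₘ = (1/4)Σ_{j≠m} |uⱼuₘ|`, and in the diagonal part the `aⱼ²` terms cancel against
the potential `aⱼ²(1 - λⱼ)/λⱼ`, leaving `Σⱼ (1 - n) aⱼ`.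
-/

open Finset Function

namespace RpowProd

noncomputable def partialDeriv {ι : Type*} [DecidableEq ι] (j : ι) (g : (ι → ℝ) → ℝ) (x : ι → ℝ) : ℝ :=
  deriv (fun t => g (update x j t)) (x j)

noncomputable def rpowProd {ι : Type*} [Fintype ι] (a x : ι → ℝ) : ℝ :=
  ∏ k, x k ^ a k

variable {ι : Type*} [Fintype ι] [DecidableEq ι]

lemma rpowProd_update (a x : ι → ℝ) (m : ι) (t : ℝ) :
    rpowProd a (update x m t) = t ^ a m * ∏ k ∈ univ.erase m, x k ^ a k := by
  rw [rpowProd, ← mul_prod_erase _ _ (mem_univ m), update_self]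
  congr 1
  exact prod_congr rfl fun k hk => by rw [update_of_ne (ne_of_mem_erase hk)]

lemma hasDerivAt_rpowProd_update (a x : ι → ℝ) {m : ι} (hx : 0 < x m) :
    HasDerivAt (fun t => rpowProd a (update x m t)) (a m / x m * rpowProd a x) (x m) := by
  have h := (Real.hasDerivAt_rpow_const (p := a m) (Or.inl hx.ne')).mul_const
    (∏ k ∈ univ.erase m, x k ^ a k)
  have hval : a m / x m * rpowProd a x = a m * x m ^ (a m - 1) * ∏ k ∈ univ.erase m, x k ^ a k := by
    rw [rpowProd, ← mul_prod_erase _ _ (mem_univ m), Real.rpow_sub hx, Real.rpow_one]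
    ring
  simpa only [rpowProd_update, hval] using h

lemma partialDeriv_rpowProd (a x : ι → ℝ) {m : ι} (hx : 0 < x m) :
    partialDeriv m (rpowProd a) x = a m / x m * rpowProd a x :=
  (hasDerivAt_rpowProd_update a x hx).deriv

lemma partialDeriv_partialDeriv_rpowProd_of_ne (a x : ι → ℝ) {j m : ι} (hjm : j ≠ m)
    (hj : 0 < x j) (hm : 0 < x m) :
    partialDeriv j (partialDeriv m (rpowProd a)) x
      = a j * a m / (x j * x m) * rpowProd a x := by
  have hfun : (fun t => partialDeriv m (rpowProd a) (update x j t))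
      = fun t => a m / x m * rpowProd a (update x j t) := by
    funext t
    rw [partialDeriv_rpowProd a _ (by rwa [update_of_ne hjm.symm]), update_of_ne hjm.symm]
  rw [partialDeriv, hfun, ((hasDerivAt_rpowProd_update a x hj).const_mul _).deriv]
  field_simp

lemma partialDeriv_partialDeriv_rpowProd_self (a x : ι → ℝ) {j : ι} (hj : 0 < x j) :
    partialDeriv j (partialDeriv j (rpowProd a)) x
      = a j * (a j - 1) / x j ^ 2 * rpowProd a x := by
  have hfun : (fun t => partialDeriv j (rpowProd a) (update x j t))
      =ᶠ[nhds (x j)] fun t => a j / t * rpowProd a (update x j t) := by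
    filter_upwards [eventually_gt_nhds hj] with t ht
    rw [partialDeriv_rpowProd a _ (by rwa [update_self]), update_self]
  have h := ((hasDerivAt_inv hj.ne').const_mul (a j)).fun_mul (hasDerivAt_rpowProd_update a x hj)
  simp only [← div_eq_mul_inv, update_eq_self] at h
  rw [partialDeriv, hfun.deriv_eq, h.deriv]
  field_simp
  ring

end RpowProd

open RpowProd

/-- The diagonal terms of the operator and the potential, applied to `∏ⱼ λⱼ ^ aⱼ` and divided
by it. -/
lemma sum_diagonal_coefficients {ι : Type*} [Fintype ι] (c : ℝ) (a l : ι → ℝ)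
    (hl : ∀ j, l j ≠ 0) :
    ∑ j, l j * (1 - l j) * (a j * (a j - 1) / l j ^ 2) + ∑ j, (1 - c * l j) * (a j / l j)
      - ∑ j, a j ^ 2 * (1 - l j) / l j = (1 - c) * ∑ j, a j := by
  rw [mul_sum, ← sum_add_distrib, ← sum_sub_distrib]
  refine sum_congr rfl fun j _ => ?_
  field_simp [hl j]
  ring

theorem stmt_6_general (n : ℕ) (u : Fin n → ℝ)
    (f : (Fin n → ℝ) → ℝ)
    (hf : ∀ l : Fin n → ℝ, f l = ∏ j, (l j) ^ (|u j| / 2 : ℝ))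
    (pD : Fin n → ((Fin n → ℝ) → ℝ) → ((Fin n → ℝ) → ℝ))
    (hpD : ∀ j g l, pD j g l = deriv (fun t => g (Function.update l j t)) (l j)) :
    ∀ l : Fin n → ℝ, (∀ j, 0 < l j) → (∑ j, l j = 1) →
      (∑ j, l j * (1 - l j) * pD j (pD j f) l)
          + (∑ j, (1 - n * l j) * pD j f l)
          - (∑ j, ∑ m, if j ≠ m then l j * l m * pD j (pD m f) l else 0)
          - (1 / 4) * (∑ j, (u j) ^ 2 * (1 - l j) / l j) * f l
        = (-((n - 1 : ℝ) / 2) * (∑ j, |u j|)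
            - (1 / 4) * ∑ j, ∑ m, if j ≠ m then |u j * u m| else 0) * f l := by
  intro l hl _
  obtain rfl : pD = partialDeriv := by funext j g l; exact hpD j g l
  set a : Fin n → ℝ := fun j => |u j| / 2
  obtain rfl : f = rpowProd a := funext hf
  have hpot : (1 / 4) * ∑ j, u j ^ 2 * (1 - l j) / l j = ∑ j, a j ^ 2 * (1 - l j) / l j := by
    rw [mul_sum]
    exact sum_congr rfl fun j _ => by simp only [a, div_pow, sq_abs]; ring
  have hoff : ∀ j m, (if j ≠ m then l j * l m * partialDeriv j (partialDeriv m (rpowProd a)) l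
      else 0) = (1 / 4) * (if j ≠ m then |u j * u m| else 0) * rpowProd a l := by
    intro j m
    split_ifs with hjm
    · rw [partialDeriv_partialDeriv_rpowProd_of_ne a l hjm (hl j) (hl m), abs_mul]
      field_simp [(hl j).ne', (hl m).ne']
      ring
    · simp
  simp only [partialDeriv_partialDeriv_rpowProd_self a l (hl _), partialDeriv_rpowProd a l (hl _),
    hoff]
  simp only [← mul_assoc, ← sum_mul, ← mul_sum]
  have hdiag := sum_diagonal_coefficients (n : ℝ) a l fun j => (hl j).ne'
  have hsum : ∑ j, |u j| = 2 * ∑ j, a j := by simp only [a, ← sum_div]; ring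
  rw [hsum]
  linear_combination rpowProd a l * hdiag - rpowProd a l * hpot

/-- The function `f(λ) = Π_j λ_j^{|u_j|/2}` is an eigenfunction of
`𝒢 − (1/4)Σ_j u_j²(1−λ_j)/λ_j` on the open simplex, with eigenvalue
`−((n−1)/2)Σ_j |u_j| − (1/4)Σ_{i≠j} |u_i u_j|`, where `𝒢` is the Jacobi operator
`Σ_j λ_j(1−λ_j)∂²_{λ_j} + Σ_j (1−nλ_j)∂_{λ_j} − Σ_{j≠ℓ} λ_jλ_ℓ ∂²_{λ_jλ_ℓ}`. -/
theorem stmt_6 (n : ℕ) (hn : 2 ≤ n) (u : Fin n → ℝ)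
    (f : (Fin n → ℝ) → ℝ)
    (hf : ∀ l : Fin n → ℝ, f l = ∏ j, (l j) ^ (|u j| / 2 : ℝ))
    (pD : Fin n → ((Fin n → ℝ) → ℝ) → ((Fin n → ℝ) → ℝ))
    (hpD : ∀ j g l, pD j g l = deriv (fun t => g (Function.update l j t)) (l j)) :
    ∀ l : Fin n → ℝ, (∀ j, 0 < l j) → (∑ j, l j = 1) →
      (∑ j, l j * (1 - l j) * pD j (pD j f) l)
          + (∑ j, (1 - n * l j) * pD j f l)
          - (∑ j, ∑ m, if j ≠ m then l j * l m * pD j (pD m f) l else 0)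
          - (1 / 4) * (∑ j, (u j) ^ 2 * (1 - l j) / l j) * f l
        = (-((n - 1 : ℝ) / 2) * (∑ j, |u j|)
            - (1 / 4) * ∑ j, ∑ m, if j ≠ m then |u j * u m| else 0) * f l :=
  stmt_6_general n u f hf pD hpD
end

section
/- If X_t is the covariance matrix with diagonal entries ∫₀ᵗ (1−λ_j(s))/λ_j(s) ds and off-diagonal entries t, where λ(s) ∈ 𝒯_n with each λ_j(s) ∈ (0,1), then for every u ∈ ℝ^n, uᵀ X_t u ≥ 0; i.e. X_t is positive semidefinite. -/
/-!
The quadratic form is `∫₀ᵗ q(λ(s)) ds` with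
`q(λ) = ∑ⱼ uⱼ² (1 - λⱼ)/λⱼ + (∑ⱼ uⱼ)² - ∑ⱼ uⱼ²`, so it suffices that
`∑ⱼ uⱼ²/λⱼ + (∑ⱼ uⱼ)² ≥ 2 ∑ⱼ uⱼ²` whenever `λⱼ > 0` and `∑ⱼ λⱼ = 1`. With `vⱼ = uⱼ/λⱼ`, the double
sum `∑ⱼₘ λⱼ λₘ (vⱼ + vₘ)²` equals twice the left-hand side, while its diagonal alone is `4 ∑ⱼ uⱼ²`.
-/

open Finset Matrix MeasureTheory

theorem two_mul_sum_sq_le_sum_sq_div_add_sq_sum {ι R : Type*} [Field R] [LinearOrder R]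
    [IsStrictOrderedRing R] (s : Finset ι) (u : ι → R) {w : ι → R}
    (hw : ∀ j ∈ s, 0 < w j) (hsum : ∑ j ∈ s, w j = 1) :
    2 * ∑ j ∈ s, u j ^ 2 ≤ ∑ j ∈ s, u j ^ 2 / w j + (∑ j ∈ s, u j) ^ 2 := by
  set f : ι → ι → R := fun j m => w j * w m * (u j / w j + u m / w m) ^ 2
  have hexpand : ∀ j ∈ s, ∀ m ∈ s,
      f j m = u j ^ 2 / w j * w m + w j * (u m ^ 2 / w m) + 2 * u j * u m := by
    intro j hj m hm
    simp only [f]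
    field_simp [(hw j hj).ne', (hw m hm).ne']
    ring
  have hdouble : ∑ j ∈ s, ∑ m ∈ s, f j m
      = 2 * (∑ j ∈ s, u j ^ 2 / w j + (∑ j ∈ s, u j) ^ 2) := by
    rw [sum_congr rfl fun j hj => sum_congr rfl fun m hm => hexpand j hj m hm]
    simp only [sum_add_distrib]
    rw [← sum_mul_sum, ← sum_mul_sum, ← sum_mul_sum, hsum, ← mul_sum]
    ring
  have hdiag (j : ι) (hj : j ∈ s) : f j j = 4 * u j ^ 2 := by
    simp only [f]
    field_simp [(hw j hj).ne']
    ring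
  have hle : ∑ j ∈ s, f j j ≤ ∑ j ∈ s, ∑ m ∈ s, f j m :=
    sum_le_sum fun j hj => single_le_sum (f := f j)
      (fun m hm => mul_nonneg (mul_nonneg (hw j hj).le (hw m hm).le) (sq_nonneg _)) hj
  rw [sum_congr rfl hdiag, ← mul_sum, hdouble] at hle
  linarith

theorem sum_sq_mul_one_sub_div_add_sq_sum_sub_sum_sq_nonneg {ι R : Type*} [Field R]
    [LinearOrder R] [IsStrictOrderedRing R] (s : Finset ι) (u : ι → R) {w : ι → R}
    (hw : ∀ j ∈ s, 0 < w j) (hsum : ∑ j ∈ s, w j = 1) :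
    0 ≤ ∑ j ∈ s, u j ^ 2 * ((1 - w j) / w j) + ((∑ j ∈ s, u j) ^ 2 - ∑ j ∈ s, u j ^ 2) := by
  have hsplit : ∑ j ∈ s, u j ^ 2 * ((1 - w j) / w j)
      = ∑ j ∈ s, u j ^ 2 / w j - ∑ j ∈ s, u j ^ 2 := by
    rw [← sum_sub_distrib]
    refine sum_congr rfl fun j hj => ?_
    field_simp [(hw j hj).ne']
  linarith [two_mul_sum_sq_le_sum_sq_div_add_sq_sum s u hw hsum]

theorem dotProduct_mulVec_eq_of_apply_eq_ite {ι R : Type*} [Fintype ι] [DecidableEq ι]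
    [CommRing R] {X : Matrix ι ι R} {d : ι → R} {c : R}
    (hX : ∀ j m, X j m = if j = m then d j else c) (u : ι → R) :
    u ⬝ᵥ X *ᵥ u = ∑ j, u j ^ 2 * d j + c * ((∑ j, u j) ^ 2 - ∑ j, u j ^ 2) := by
  have hrow (j : ι) : (X *ᵥ u) j = c * ∑ m, u m + (d j - c) * u j := by
    have hentry (m : ι) : X j m * u m = c * u m + if j = m then (d j - c) * u j else 0 := by
      rw [hX]; split_ifs with h <;> simp [h]; ring
    simp only [mulVec, dotProduct, hentry, sum_add_distrib, sum_ite_eq, mem_univ, if_true,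
      mul_sum]
  have hterm (j : ι) :
      u j * (X *ᵥ u) j = (c * ∑ m, u m) * u j + (u j ^ 2 * d j - c * u j ^ 2) := by
    rw [hrow]; ring
  rw [dotProduct, sum_congr rfl fun j _ => hterm j, sum_add_distrib, sum_sub_distrib, ← mul_sum,
    ← mul_sum]
  ring

open Matrix MeasureTheory in
theorem stmt_16_general (n : ℕ) (t : ℝ) (ht : 0 < t)
    (lam : ℝ → Fin n → ℝ)
    (hlam : ∀ s ∈ Set.Icc (0 : ℝ) t,
      (∀ j, lam s j ∈ Set.Ioo (0 : ℝ) 1) ∧ ∑ j, lam s j = 1)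
    (hint : ∀ j, IntervalIntegrable (fun s => (1 - lam s j) / lam s j) volume 0 t)
    (X : Matrix (Fin n) (Fin n) ℝ)
    (hX : ∀ j m, X j m =
      if j = m then ∫ s in (0 : ℝ)..t, (1 - lam s j) / lam s j else t) :
    ∀ u : Fin n → ℝ, 0 ≤ u ⬝ᵥ X.mulVec u := by
  intro u
  have hterm (j : Fin n) :
      IntervalIntegrable (fun s => u j ^ 2 * ((1 - lam s j) / lam s j)) volume 0 t :=
    (hint j).const_mul _
  calc 0 ≤ ∫ s in (0 : ℝ)..t,
        (∑ j, u j ^ 2 * ((1 - lam s j) / lam s j) + ((∑ j, u j) ^ 2 - ∑ j, u j ^ 2)) :=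
        intervalIntegral.integral_nonneg ht.le fun s hs =>
          sum_sq_mul_one_sub_div_add_sq_sum_sub_sum_sq_nonneg _ u
            (fun j _ => ((hlam s hs).1 j).1) (hlam s hs).2
    _ = (∑ j, u j ^ 2 * ∫ s in (0 : ℝ)..t, (1 - lam s j) / lam s j)
          + t * ((∑ j, u j) ^ 2 - ∑ j, u j ^ 2) := by
        have hsum : IntervalIntegrable
            (fun s => ∑ j, u j ^ 2 * ((1 - lam s j) / lam s j)) volume 0 t := by
          simpa only [sum_fn] using IntervalIntegrable.sum univ fun j _ => hterm j
        rw [intervalIntegral.integral_add hsum intervalIntegrable_const,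
          intervalIntegral.integral_finsetSum fun j _ => hterm j,
          intervalIntegral.integral_const, smul_eq_mul, sub_zero]
        simp only [intervalIntegral.integral_const_mul]
    _ = u ⬝ᵥ X *ᵥ u := (dotProduct_mulVec_eq_of_apply_eq_ite hX u).symm

open Matrix MeasureTheory in
/-- The covariance matrix with diagonal entries `∫₀ᵗ (1−λ_j(s))/λ_j(s) ds` and off-diagonal
entries `t`, where `λ(s)` lies in the simplex `𝒯_n` with `λ_j(s) ∈ (0,1)`, is positive
semidefinite: `uᵀ Σ(t) u ≥ 0` for every `u ∈ ℝⁿ`. -/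
theorem stmt_16 (n : ℕ) (hn : 2 ≤ n) (t : ℝ) (ht : 0 < t)
    (lam : ℝ → Fin n → ℝ)
    (hlam : ∀ s ∈ Set.Icc (0 : ℝ) t,
      (∀ j, lam s j ∈ Set.Ioo (0 : ℝ) 1) ∧ ∑ j, lam s j = 1)
    (hint : ∀ j, IntervalIntegrable (fun s => (1 - lam s j) / lam s j) volume 0 t)
    (X : Matrix (Fin n) (Fin n) ℝ)
    (hX : ∀ j m, X j m =
      if j = m then ∫ s in (0 : ℝ)..t, (1 - lam s j) / lam s j else t) :
    ∀ u : Fin n → ℝ, 0 ≤ u ⬝ᵥ X.mulVec u :=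
  stmt_16_general n t ht lam hlam hint X hX
end
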